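/- arXiv:2110.13646 — 2 statements merged into one kernel-verified Lean document; each statement's English description precedes it below -/
import Mathlib

section
/- If a, b, c, d are complex numbers of modulus one with a + b + c + d = 0, then a = -b or a = -c or a = -d. -/
/-! Conjugating `a + b + c + d = 0` turns it into `a⁻¹ + b⁻¹ + c⁻¹ + d⁻¹ = 0`, i.e.
`bcd + acd + abd + abc = 0`. Since `(a + b)(a + c)(a + d) = a²(a + b + c + d) + bcd + acd + abd + abc`,
one of the three factors vanishes. -/

theorem mul_add_mul_add_mul_add_eq_of_add_eq_zero {R : Type*} [CommRing R] {a b c d : R}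
    (h : a + b + c + d = 0) :
    (a + b) * (a + c) * (a + d) = b * c * d + a * c * d + a * b * d + a * b * c := by
  linear_combination a ^ 2 * h

theorem eq_neg_or_of_add_eq_zero_of_inv_add_eq_zero {K : Type*} [Field K] {a b c d : K}
    (ha : a ≠ 0) (hb : b ≠ 0) (hc : c ≠ 0) (hd : d ≠ 0)
    (h : a + b + c + d = 0) (h_inv : a⁻¹ + b⁻¹ + c⁻¹ + d⁻¹ = 0) :
    a = -b ∨ a = -c ∨ a = -d := by
  have hσ₃ : b * c * d + a * c * d + a * b * d + a * b * c = 0 := by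
    have : b * c * d + a * c * d + a * b * d + a * b * c
        = a * b * c * d * (a⁻¹ + b⁻¹ + c⁻¹ + d⁻¹) := by
      field_simp
    rw [this, h_inv, mul_zero]
  have key := (mul_add_mul_add_mul_add_eq_of_add_eq_zero h).trans hσ₃
  simp only [mul_eq_zero, add_eq_zero_iff_eq_neg] at key
  tauto

theorem Complex.inv_add_eq_zero_of_norm_eq_one {a b c d : ℂ} (ha : ‖a‖ = 1) (hb : ‖b‖ = 1)
    (hc : ‖c‖ = 1) (hd : ‖d‖ = 1) (h : a + b + c + d = 0) :
    a⁻¹ + b⁻¹ + c⁻¹ + d⁻¹ = 0 := by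
  simpa only [map_add, map_zero, ← inv_eq_conj ha, ← inv_eq_conj hb, ← inv_eq_conj hc,
    ← inv_eq_conj hd] using congrArg (starRingEnd ℂ) h

theorem sum_four_unimodular_eq_zero
    (a b c d : ℂ) (ha : ‖a‖ = 1) (hb : ‖b‖ = 1)
    (hc : ‖c‖ = 1) (hd : ‖d‖ = 1)
    (h : a + b + c + d = 0) :
    a = -b ∨ a = -c ∨ a = -d := by
  have ne_zero {z : ℂ} (hz : ‖z‖ = 1) : z ≠ 0 := norm_ne_zero_iff.mp (hz ▸ one_ne_zero)
  exact eq_neg_or_of_add_eq_zero_of_inv_add_eq_zero (ne_zero ha) (ne_zero hb) (ne_zero hc)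
    (ne_zero hd) h (Complex.inv_add_eq_zero_of_norm_eq_one ha hb hc hd h)
end

section
/- Björck's circulant matrix C₆ with first row (1, id, -d, -i, -d̄, id̄), where d = (1-√3)/2 + i·√(√3/2), is a 6×6 complex Hadamard matrix. In particular |d| = 1. -/
/-!
For a unimodular sequence `c : Fin n → ℂ`, the matrix `(c (k - j))_{j,k}` satisfies
`Cᴴ C = (ρ (j - i))_{i,j}`, where `ρ` is the periodic autocorrelation of `c`; since `ρ 0 = n`,
`C` is complex Hadamard as soon as `ρ` vanishes at every nonzero shift. For Björck's row the odd
shifts cancel identically, and the even ones reduce to `d² + d̄² = 2 (d + d̄)`: with `d d̄ = 1`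
this says that `x = d + d̄ = 1 - √3` is a root of `x² - 2x - 2`.
-/

open Matrix Complex

/-- An `n × n` complex Hadamard matrix: `Hᴴ * H = n • 1` and all entries unimodular. -/
def IsCHM (n : ℕ) (H : Matrix (Fin n) (Fin n) ℂ) : Prop :=
  Hᴴ * H = (n : ℂ) • (1 : Matrix (Fin n) (Fin n) ℂ) ∧
  ∀ i j, ‖H i j‖ = 1

/-- A monomial unitary matrix: unitary, exactly one nonzero entry in each row and
each column, and each nonzero entry has modulus one. -/
def IsMonomialUnitary {n : ℕ} (P : Matrix (Fin n) (Fin n) ℂ) : Prop :=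
  P ∈ Matrix.unitaryGroup (Fin n) ℂ ∧
  (∀ i, ∃! j, P i j ≠ 0) ∧ (∀ j, ∃! i, P i j ≠ 0) ∧
  (∀ i j, P i j ≠ 0 → ‖P i j‖ = 1)

/-- Complex equivalence of `n × n` matrices. -/
def ComplexEquiv {n : ℕ} (U V : Matrix (Fin n) (Fin n) ℂ) : Prop :=
  ∃ P Q : Matrix (Fin n) (Fin n) ℂ,
    IsMonomialUnitary P ∧ IsMonomialUnitary Q ∧ U = P * V * Q

noncomputable def bjorckD : ℂ :=
  ⟨(1 - Real.sqrt 3) / 2, Real.sqrt (Real.sqrt 3 / 2)⟩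

/-- First row of Björck's circulant matrix. -/
noncomputable def bjorckRow : Fin 6 → ℂ :=
  ![1, Complex.I * bjorckD, -bjorckD, -Complex.I,
    -(starRingEnd ℂ bjorckD), Complex.I * starRingEnd ℂ bjorckD]

/-- Björck's circulant matrix , with  entry . -/
noncomputable def bjorckC6 : Matrix (Fin 6) (Fin 6) ℂ :=
  fun j k => bjorckRow (k - j)

open ComplexConjugate

section Circulant

variable {G α : Type*} [AddCommGroup G] [Fintype G]

def autocorrelation [NonUnitalNonAssocSemiring α] [Star α] (c : G → α) (t : G) : α :=
  ∑ m, star (c m) * c (m + t)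

theorem conjTranspose_mul_self_apply_eq_autocorrelation [NonUnitalNonAssocSemiring α] [Star α]
    (c : G → α) (i j : G) :
    ((of fun j k => c (k - j))ᴴ * of fun j k => c (k - j)) i j = autocorrelation c (j - i) := by
  simp only [mul_apply, conjTranspose_apply, of_apply, autocorrelation]
  refine Fintype.sum_equiv (Equiv.subLeft i) _ _ fun k => ?_
  rw [Equiv.subLeft_apply, show i - k + (j - i) = j - k by abel]

theorem isCHM_of_autocorrelation_eq_zero {n : ℕ} [NeZero n] (c : Fin n → ℂ)
    (hc : ∀ m, ‖c m‖ = 1) (hcorr : ∀ t ≠ 0, autocorrelation c t = 0) :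
    IsCHM n (of fun j k => c (k - j)) := by
  refine ⟨?_, fun j k => hc (k - j)⟩
  ext i j
  rw [conjTranspose_mul_self_apply_eq_autocorrelation]
  by_cases hij : i = j
  · subst hij
    simp [autocorrelation, conj_mul', hc]
  · rw [Matrix.smul_apply, one_apply_ne hij, smul_zero,
      hcorr _ (sub_ne_zero.mpr (Ne.symm hij))]

end Circulant

theorem normSq_bjorckD : normSq bjorckD = 1 := by
  have h3 : √3 ^ 2 = 3 := Real.sq_sqrt (by norm_num)
  have h32 : √(√3 / 2) ^ 2 = √3 / 2 := Real.sq_sqrt (by positivity)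
  rw [bjorckD, normSq_mk]
  nlinarith

theorem norm_bjorckD : ‖bjorckD‖ = 1 := by
  rw [Complex.norm_def, normSq_bjorckD, Real.sqrt_one]

theorem bjorckD_mul_conj : bjorckD * conj bjorckD = 1 := by
  rw [mul_conj, normSq_bjorckD, ofReal_one]

theorem bjorckD_sq_add_conj_sq :
    bjorckD ^ 2 + conj bjorckD ^ 2 = 2 * (bjorckD + conj bjorckD) := by
  have hsum : bjorckD + conj bjorckD = 1 - √3 := by
    rw [add_conj, show bjorckD.re = (1 - √3) / 2 from rfl]; push_cast; ring
  have h3 : (√3 : ℂ) ^ 2 = 3 := by norm_cast; exact Real.sq_sqrt (by norm_num)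
  calc bjorckD ^ 2 + conj bjorckD ^ 2
      = (bjorckD + conj bjorckD) ^ 2 - 2 * (bjorckD * conj bjorckD) := by ring
    _ = (1 - (√3 : ℂ)) ^ 2 - 2 := by rw [hsum, bjorckD_mul_conj]; ring
    _ = 2 * (1 - (√3 : ℂ)) := by linear_combination h3
    _ = 2 * (bjorckD + conj bjorckD) := by rw [hsum]

theorem norm_bjorckRow (m : Fin 6) : ‖bjorckRow m‖ = 1 := by
  fin_cases m <;> simp [bjorckRow, norm_bjorckD]

theorem autocorrelation_bjorckRow (t : Fin 6) (ht : t ≠ 0) : autocorrelation bjorckRow t = 0 := by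
  fin_cases t
  · contradiction
  all_goals simp only [autocorrelation, Fin.sum_univ_six, Fin.reduceFinMk, Fin.mk_one,
    Fin.isValue, Fin.reduceAdd, bjorckRow, cons_val, cons_val_zero, cons_val_one, RCLike.star_def,
    map_one, map_mul, map_neg, conj_I, conj_conj]
  · ring
  · linear_combination bjorckD_sq_add_conj_sq + (2 * conj bjorckD - bjorckD ^ 2) * I_sq
  · ring
  · linear_combination bjorckD_sq_add_conj_sq + (2 * bjorckD - conj bjorckD ^ 2) * I_sq
  · ring

theorem bjorck_is_CHM :
    ‖bjorckD‖ = 1 ∧ IsCHM 6 bjorckC6 :=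
  ⟨norm_bjorckD,
    isCHM_of_autocorrelation_eq_zero bjorckRow norm_bjorckRow autocorrelation_bjorckRow⟩
end
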